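/- arXiv:math/9912141 — 6 statements merged into one kernel-verified Lean document; each statement's English description precedes it below -/
import Mathlib

section
/- Let A be a commutative ring and n a positive integer. Let R = A[X_1, …, X_n] be the polynomial ring in n variables over A, and let Δ(Y) = ∏_{i=1}^n (Y - X_i) in R[Y]. For every polynomial f ∈ A[X], let μ(f) be the R-linear endomorphism of the free rank-n R-module R[Y]/(Δ(Y)) given by multiplication by the residue class of f(Y). Then the characteristic polynomial of μ(f) equals ∏_{i=1}^n (Z - f(X_i)). -/
/-!
In the Newton basis `N₀, …, N_{n-1}`, `N_k = ∏_{j<k} (Y - x_j)`, of `R[Y]/(Δ)` with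
`Δ = ∏ᵢ (Y - xᵢ)`, multiplication by `Y` is lower triangular with diagonal `x₀, …, x_{n-1}`,
because `Y N_k = N_{k+1} + x_k N_k` and `N_n = Δ = 0`. Multiplication by `f(Y)` is `f` applied to
it, hence lower triangular with diagonal `f(x_k)`, and the characteristic polynomial does not
depend on the basis. This works for any elements `xᵢ` of any commutative ring.
-/

open Polynomial

variable (A : Type*) [CommRing A] (n : ℕ)

/-- `Δ(Y) = ∏_{i=1}^n (Y - X_i)` as a polynomial in `Y` over `R = A[X_1, …, X_n]`. -/
noncomputable def Delta : Polynomial (MvPolynomial (Fin n) A) :=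
  ∏ i : Fin n, (X - C (MvPolynomial.X i))

theorem Delta_monic : (Delta A n).Monic :=
  monic_prod_of_monic _ _ fun i _ => monic_X_sub_C (MvPolynomial.X i)

/-- The basis `1, Y, …, Y^{n-1}` of the free rank-`n` module `R[Y]/(Δ(Y))`. -/
noncomputable def deltaPowerBasis :
    PowerBasis (MvPolynomial (Fin n) A) (AdjoinRoot (Delta A n)) :=
  AdjoinRoot.powerBasis' (Delta_monic A n)

open Module Finset Lagrange

namespace Matrix

variable {ι R : Type*} [Fintype ι] [LinearOrder ι] [CommRing R] {M N : Matrix ι ι R}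

lemma IsLowerTriangular.mul_apply_self (hM : M.IsLowerTriangular) (hN : N.IsLowerTriangular)
    (i : ι) : (M * N) i i = M i i * N i i := by
  rw [mul_apply, sum_eq_single i]
  · intro j _ hji
    rcases hji.lt_or_gt with hj | hj
    · rw [hN hj, mul_zero]
    · rw [hM hj, zero_mul]
  · simp

lemma IsLowerTriangular.pow_apply_self [DecidableEq ι] (hM : M.IsLowerTriangular) (i : ι)
    (k : ℕ) : (M ^ k) i i = M i i ^ k := by
  induction k with
  | zero => simp
  | succ k ih => rw [pow_succ, IsLowerTriangular.mul_apply_self (hM.pow k) hM, ih, pow_succ]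

lemma IsLowerTriangular.aeval [DecidableEq ι] (hM : M.IsLowerTriangular) (p : R[X]) :
    (Polynomial.aeval M p).IsLowerTriangular :=
  Algebra.adjoin_le (S := blockTriangularSubalgebra R R OrderDual.toDual)
    (Set.singleton_subset_iff.2 hM) (aeval_mem_adjoin_singleton R M)

lemma IsLowerTriangular.aeval_apply_self [DecidableEq ι] (hM : M.IsLowerTriangular) (p : R[X])
    (i : ι) : Polynomial.aeval M p i i = p.eval (M i i) := by
  simp only [aeval_eq_sum_range, eval_eq_sum_range, sum_apply, smul_apply, hM.pow_apply_self,
    smul_eq_mul]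

lemma charpoly_of_isLowerTriangular [DecidableEq ι] (hM : M.IsLowerTriangular) :
    M.charpoly = ∏ i, (X - C (M i i)) := by
  simp [charpoly, det_of_isLowerTriangular _ (charmatrix_blockTriangular_iff.2 hM)]

end Matrix

namespace AdjoinRoot

variable {R : Type*} [CommRing R]

lemma toMatrix_mulLeft_mk {ι : Type*} [Fintype ι] [DecidableEq ι] {f : R[X]}
    (b : Basis ι R (AdjoinRoot f)) (g : R[X]) :
    LinearMap.toMatrix b b (LinearMap.mulLeft R (mk f g))
      = aeval (LinearMap.toMatrix b b (LinearMap.mulLeft R (root f))) g := by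
  let φ := (LinearMap.toMatrixAlgEquiv b).toAlgHom.comp (Algebra.lmul R (AdjoinRoot f))
  exact (aeval_eq g ▸ aeval_algHom_apply φ (root f) g).symm

lemma powerBasis'_repr_mk_of_natDegree_lt {g p : R[X]} (hg : g.Monic)
    (hp : p.natDegree < g.natDegree) (i : Fin g.natDegree) :
    (powerBasis' hg).basis.repr (mk g p) i = p.coeff i := by
  nontriviality R
  change (powerBasisAux' hg).repr (mk g p) i = _
  rw [powerBasisAux'_repr_apply_to_fun, modByMonicHom_mk,
    (modByMonic_eq_self_iff hg).2 (degree_lt_degree hp)]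

variable {n : ℕ} (x : Fin n → R)

section Newton

variable [Nontrivial R]

lemma natDegree_nodal_univ : (nodal univ x).natDegree = n :=
  natDegree_nodal.trans (card_fin n)

/-- `1, Y - x₀, (Y - x₀)(Y - x₁), …`; a basis because its matrix in the power basis is
unitriangular. -/
noncomputable def newtonBasis : Basis (Fin n) R (AdjoinRoot (nodal univ x)) :=
  let b := (powerBasis' (nodal_monic (s := univ) (v := x))).basis.reindex
    (finCongr (natDegree_nodal_univ x))
  have hb := (b.is_basis_iff_det (v := fun k => mk _ (nodal (Iio k) x))).2 <| by
    have hcoeff : b.toMatrix (fun k => mk _ (nodal (Iio k) x))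
        = Matrix.of fun i j : Fin n => (nodal (Iio j) x).coeff i := by
      ext i j
      rw [Basis.toMatrix_apply, Basis.repr_reindex_apply]
      refine powerBasis'_repr_mk_of_natDegree_lt _ ?_ _
      rw [natDegree_nodal, natDegree_nodal_univ, Fin.card_Iio]
      exact j.isLt
    rw [Basis.det_apply, hcoeff,
      Matrix.det_matrixOfPolynomials _ (by simp [natDegree_nodal]) fun _ => nodal_monic]
    exact isUnit_one
  Basis.mk hb.1 hb.2.ge

lemma newtonBasis_apply (k : Fin n) : newtonBasis x k = mk _ (nodal (Iio k) x) := by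
  simp [newtonBasis]

lemma newtonBasis_repr_mk_nodal_Iic {i k : Fin n} (hik : i ≤ k) :
    (newtonBasis x).repr (mk _ (nodal (Iic k) x)) i = 0 := by
  by_cases hk : (k : ℕ) + 1 < n
  · have : Iic k = Iio (⟨k + 1, hk⟩ : Fin n) := by
      ext j
      simp only [mem_Iic, mem_Iio, Fin.le_def, Fin.lt_def]
      omega
    rw [this, ← newtonBasis_apply, Basis.repr_self,
      Finsupp.single_eq_of_ne (Fin.lt_def.2 (Nat.lt_succ_of_le hik)).ne]
  · have : Iic k = univ := by
      ext j
      simp only [mem_Iic, mem_univ, iff_true, Fin.le_def]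
      omega
    rw [this, mk_self, map_zero, Finsupp.zero_apply]

lemma toMatrix_newtonBasis_mulLeft_root_of_le {i k : Fin n} (hik : i ≤ k) :
    LinearMap.toMatrix (newtonBasis x) (newtonBasis x) (LinearMap.mulLeft R (root _)) i k
      = if i = k then x k else 0 := by
  have hmul : root (nodal univ x) * newtonBasis x k
      = mk _ (nodal (Iic k) x) + x k • newtonBasis x k := by
    have : X * nodal (Iio k) x = nodal (Iic k) x + C (x k) * nodal (Iio k) x := by
      rw [← Iio_insert, nodal_insert_eq_nodal notMem_Iio_self]
      ring
    rw [newtonBasis_apply, ← mk_X, ← map_mul, this, map_add, map_mul, mk_C, Algebra.smul_def,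
      algebraMap_eq]
  rw [LinearMap.toMatrix_apply, LinearMap.mulLeft_apply, hmul, map_add, map_smul,
    Finsupp.add_apply, newtonBasis_repr_mk_nodal_Iic x hik, Basis.repr_self, Finsupp.smul_apply,
    Finsupp.single_apply]
  simp [eq_comm]

end Newton

theorem charpoly_toMatrix_mulLeft_mk_nodal {ι : Type*} [Fintype ι] [DecidableEq ι]
    (b : Basis ι R (AdjoinRoot (nodal univ x))) (g : R[X]) :
    (LinearMap.toMatrix b b (LinearMap.mulLeft R (mk _ g))).charpoly
      = ∏ i, (X - C (g.eval (x i))) := by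
  nontriviality R
  have : Module.Free R (AdjoinRoot (nodal univ x)) := .of_basis b
  have : Module.Finite R (AdjoinRoot (nodal univ x)) := .of_basis b
  have hT : (LinearMap.toMatrix (newtonBasis x) (newtonBasis x)
      (LinearMap.mulLeft R (root _))).IsLowerTriangular := fun i k hik => by
    have hik : i < k := OrderDual.toDual_lt_toDual.1 hik
    rw [toMatrix_newtonBasis_mulLeft_root_of_le x hik.le, if_neg hik.ne]
  rw [LinearMap.charpoly_toMatrix, ← LinearMap.charpoly_toMatrix _ (newtonBasis x),
    toMatrix_mulLeft_mk, Matrix.charpoly_of_isLowerTriangular (hT.aeval g)]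
  simp only [hT.aeval_apply_self, toMatrix_newtonBasis_mulLeft_root_of_le x le_rfl, if_pos]

end AdjoinRoot

/-- For every `f ∈ A[X]`, the characteristic polynomial of the `R`-linear endomorphism of
`R[Y]/(Δ(Y))` given by multiplication by (the residue class of) `f(Y)` equals
`∏_{i=1}^n (Z - f(X_i))`, where `R = A[X_1, …, X_n]` and `Δ(Y) = ∏_{i=1}^n (Y - X_i)`. -/
theorem charpoly_mul_adjoinRoot_Delta (f : Polynomial A) :
    (LinearMap.toMatrix (deltaPowerBasis A n).basis (deltaPowerBasis A n).basis
        (LinearMap.mulLeft (MvPolynomial (Fin n) A)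
          (AdjoinRoot.mk (Delta A n)
            (f.map (algebraMap A (MvPolynomial (Fin n) A)))))).charpoly
      = ∏ i : Fin n, (X - C (Polynomial.aeval (MvPolynomial.X i) f)) := by
  simp only [← eval_map_algebraMap]
  exact AdjoinRoot.charpoly_toMatrix_mulLeft_mk_nodal MvPolynomial.X _ _
end

section
/- Let A be a commutative ring and F(X) = X^n - u_1 X^{n-1} + … + (-1)^n u_n a monic polynomial of positive degree n in A[X]. Let u_F be any A-algebra homomorphism from the symmetric subalgebra of A[X_1, …, X_n] to A satisfying u_F(e_i) = u_i for i = 1, …, n, where e_i is the i-th elementary symmetric polynomial in X_1, …, X_n. Then for every f ∈ A[X], the characteristic polynomial of the A-linear endomorphism μ_F(f) of A[X]/(F(X)) given by multiplication by the residue class of f equals Z^n - u_F(e_1(f(X_1), …, f(X_n))) Z^{n-1} + … + (-1)^n u_F(e_n(f(X_1), …, f(X_n))). (Here each e_i(f(X_1), …, f(X_n)) is a symmetric polynomial and hence lies in the symmetric subalgebra.) -/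
open MvPolynomial

/-- Substituting `X_j ↦ f(X_j)` into a symmetric polynomial yields a symmetric polynomial. -/
theorem subst_isSymmetric {A : Type*} [CommRing A] {n : ℕ} (f : Polynomial A)
    {p : MvPolynomial (Fin n) A} (hp : p.IsSymmetric) :
    (MvPolynomial.aeval
      (fun j => Polynomial.aeval (MvPolynomial.X j : MvPolynomial (Fin n) A) f) p).IsSymmetric := by
  intro e
  have h1 : (rename e) ((MvPolynomial.aeval
        (fun j => Polynomial.aeval (MvPolynomial.X j : MvPolynomial (Fin n) A) f)) p)
      = MvPolynomial.aeval
        (fun j => Polynomial.aeval (MvPolynomial.X (e j) : MvPolynomial (Fin n) A) f) p := by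
    rw [← AlgHom.comp_apply, comp_aeval]
    congr 1
    congr 1
    funext j
    rw [← Polynomial.aeval_algHom_apply (rename (R := A) e) (MvPolynomial.X j) f, rename_X]
  rw [h1]
  have h2 : (fun j => Polynomial.aeval (MvPolynomial.X (e j) : MvPolynomial (Fin n) A) f)
      = (fun j => Polynomial.aeval (MvPolynomial.X j : MvPolynomial (Fin n) A) f) ∘ e := rfl
  rw [h2, ← aeval_rename, hp e]

/-- The `i`-th elementary symmetric polynomial evaluated at `f(X_1), …, f(X_n)`,
as an element of the symmetric subalgebra of `A[X_1, …, X_n]`. -/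
noncomputable def esymmSubst {A : Type*} [CommRing A] {n : ℕ} (f : Polynomial A) (i : ℕ) :
    symmetricSubalgebra (Fin n) A :=
  ⟨MvPolynomial.aeval
      (fun j => Polynomial.aeval (MvPolynomial.X j : MvPolynomial (Fin n) A) f)
      (esymm (Fin n) A i),
   (mem_symmetricSubalgebra _).2 (subst_isSymmetric f (esymm_isSymmetric (Fin n) A i))⟩

/-- The `i`-th elementary symmetric polynomial as an element of the symmetric subalgebra. -/
noncomputable def esymmMem (A : Type*) [CommRing A] (n : ℕ) (i : ℕ) :
    symmetricSubalgebra (Fin n) A :=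
  ⟨esymm (Fin n) A i, (mem_symmetricSubalgebra _).2 (esymm_isSymmetric (Fin n) A i)⟩

/-!
The multiplication matrix modulo a monic polynomial and its characteristic polynomial commute with
base change, so it suffices to treat the universal polynomial `∏ k, (X - X k)`, whose coefficients
`± e_i` lie in the symmetric subalgebra, and then specialise along `u_F`. Over `A[X_1, …, X_n]`
that polynomial splits, and the Vandermonde matrix of `X_1, …, X_n` conjugates the multiplication
matrix to `diag (f(X_1), …, f(X_n))`. Its determinant `∏ (X_j - X_i)` is not a unit but a
non-zero-divisor, which is enough to cancel it between the determinants of the two conjugated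
characteristic matrices.
-/

open Polynomial nonZeroDivisors

namespace MvPolynomial

theorem X_sub_X_mem_nonZeroDivisors {σ R : Type*} [CommRing R] [DecidableEq σ] {i j : σ}
    (h : i ≠ j) : (X i - X j : MvPolynomial σ R) ∈ (MvPolynomial σ R)⁰ := by
  let shift : MvPolynomial σ R →ₐ[R] MvPolynomial σ R :=
    aeval (Function.update X i (X i + X j))
  let unshift : MvPolynomial σ R →ₐ[R] MvPolynomial σ R :=
    aeval (Function.update X i (X i - X j))
  have hinv : unshift.comp shift = AlgHom.id R _ := algHom_ext fun k => by
    rcases eq_or_ne k i with rfl | hk <;> simp [shift, unshift, h.symm, *]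
  have hinj : Function.Injective shift :=
    Function.LeftInverse.injective (g := unshift) fun p => congr($hinv p)
  refine mem_nonZeroDivisors_of_injective hinj ?_
  simpa [shift, h.symm] using isRegular_iff_mem_nonZeroDivisors.1 (isRegular_X (n := i))

theorem det_vandermonde_X_mem_nonZeroDivisors {R : Type*} [CommRing R] (n : ℕ) :
    (Matrix.vandermonde (X : Fin n → MvPolynomial (Fin n) R)).det
      ∈ (MvPolynomial (Fin n) R)⁰ := by
  rw [Matrix.det_vandermonde]
  exact prod_mem fun i _ => prod_mem fun j hj =>
    X_sub_X_mem_nonZeroDivisors (Finset.mem_Ioi.mp hj).ne'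

end MvPolynomial

namespace Matrix

theorem charpoly_eq_of_mul_eq_mul {R ι : Type*} [CommRing R] [Fintype ι] [DecidableEq ι]
    {P M N : Matrix ι ι R} (hP : P.det ∈ R⁰) (h : P * M = N * P) :
    M.charpoly = N.charpoly := by
  have hchar :
      Polynomial.C.mapMatrix P * M.charmatrix = N.charmatrix * Polynomial.C.mapMatrix P := by
    simp only [charmatrix, Matrix.mul_sub, Matrix.sub_mul, ← map_mul, h]
    rw [(scalar_commute _ (fun r => Commute.all _ r) _).eq]
  have hdet : Polynomial.C P.det * M.charpoly = Polynomial.C P.det * N.charpoly := by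
    simpa only [det_mul, RingHom.map_det, charpoly, mul_comm] using congr(det $hchar)
  rw [← Polynomial.smul_eq_C_mul, ← Polynomial.smul_eq_C_mul] at hdet
  exact (isRegular_iff_mem_nonZeroDivisors.2 hP).left.isSMulRegular.polynomial hdet

end Matrix

namespace Polynomial

variable {R S : Type*} [CommRing R] [CommRing S]

/-- The matrix of multiplication by `f` on `R[X] ⧸ (F)` in the basis `1, X, …, X ^ (m - 1)`,
when `F` is monic of degree `m`. The size is a separate parameter so that base change does not
have to transport along equalities of degrees. -/
noncomputable def mulModMatrix (F f : R[X]) (m : ℕ) : Matrix (Fin m) (Fin m) R :=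
  Matrix.of fun i j => ((f * X ^ (j : ℕ)) %ₘ F).coeff i

theorem toMatrix_mulLeft_adjoinRoot {F : R[X]} (hF : F.Monic) (f : R[X]) :
    LinearMap.toMatrix (AdjoinRoot.powerBasis' hF).basis (AdjoinRoot.powerBasis' hF).basis
      (LinearMap.mulLeft R (AdjoinRoot.mk F f)) = mulModMatrix F f F.natDegree := by
  ext i j
  rw [LinearMap.toMatrix_apply, PowerBasis.basis_eq_pow, AdjoinRoot.powerBasis'_gen,
    ← AdjoinRoot.mk_X, ← map_pow, LinearMap.mulLeft_apply, ← map_mul]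
  exact congr(coeff $(AdjoinRoot.modByMonicHom_mk hF _) i)

theorem charpoly_toMatrix_mulLeft_adjoinRoot {F : R[X]} (hF : F.Monic) (f : R[X]) {m : ℕ}
    (hm : F.natDegree = m) :
    (LinearMap.toMatrix (AdjoinRoot.powerBasis' hF).basis (AdjoinRoot.powerBasis' hF).basis
      (LinearMap.mulLeft R (AdjoinRoot.mk F f))).charpoly = (mulModMatrix F f m).charpoly := by
  subst hm
  exact congrArg Matrix.charpoly (toMatrix_mulLeft_adjoinRoot hF f)

theorem mulModMatrix_map (φ : R →+* S) {F : R[X]} (hF : F.Monic) (f : R[X]) (m : ℕ) :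
    (mulModMatrix F f m).map φ = mulModMatrix (F.map φ) (f.map φ) m := by
  ext i j
  simp [mulModMatrix, ← coeff_map, map_modByMonic φ hF]

theorem vandermonde_mul_mulModMatrix {G : R[X]} {n : ℕ} (hG : G.Monic) (hdeg : G.natDegree = n)
    {x : Fin n → R} (hroot : ∀ k, G.IsRoot (x k)) (g : R[X]) :
    Matrix.vandermonde x * mulModMatrix G g n
      = Matrix.diagonal (fun k => g.eval (x k)) * Matrix.vandermonde x := by
  nontriviality R
  ext k j
  have hlt : ((g * X ^ (j : ℕ)) %ₘ G).degree < n :=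
    calc _ < G.degree := degree_modByMonic_lt _ hG
      _ ≤ G.natDegree := degree_le_natDegree
      _ = n := by rw [hdeg]
  calc ∑ l : Fin n, x k ^ (l : ℕ) * ((g * X ^ (j : ℕ)) %ₘ G).coeff l
      = ((g * X ^ (j : ℕ)) %ₘ G).eval (x k) := by
        simp only [mul_comm (x k ^ _), eval_eq_sum]
        exact sum_fin (fun e a => a * x k ^ e) (fun _ => zero_mul _) hlt
    _ = (g * X ^ (j : ℕ)).eval (x k) := by
        simp [modByMonic_eq_sub_mul_div, (hroot k).eq_zero]
    _ = _ := by simp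

theorem charpoly_mulModMatrix_prod_X_sub_C {n : ℕ} {x : Fin n → R}
    (hx : (Matrix.vandermonde x).det ∈ R⁰) (g : R[X]) :
    (mulModMatrix (∏ k, (X - C (x k))) g n).charpoly = ∏ k, (X - C (g.eval (x k))) := by
  nontriviality R
  have hroot (k : Fin n) : (∏ l, (X - C (x l))).IsRoot (x k) := by
    simp [IsRoot, eval_prod, Finset.prod_eq_zero (Finset.mem_univ k)]
  rw [Matrix.charpoly_eq_of_mul_eq_mul hx <| vandermonde_mul_mulModMatrix
    (monic_prod_of_monic _ _ fun k _ => monic_X_sub_C (x k)) (by simp) hroot g,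
    Matrix.charpoly_diagonal]

/-- `X ^ n - c 1 * X ^ (n - 1) + ⋯ + (-1) ^ n * c n`, the monic polynomial whose roots have
elementary symmetric functions `c i`. -/
noncomputable def signedMonic (n : ℕ) (c : ℕ → R) : R[X] :=
  X ^ n + ∑ i ∈ Finset.Icc 1 n, C ((-1) ^ i * c i) * X ^ (n - i)

theorem signedMonic_map {Φ : Type*} [FunLike Φ R S] [RingHomClass Φ R S] (φ : Φ) (n : ℕ)
    (c : ℕ → R) : (signedMonic n c).map (φ : R →+* S) = signedMonic n (φ ∘ c) := by
  simp [signedMonic, Polynomial.map_sum]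

theorem degree_signedMonic_sub_X_pow_lt (n : ℕ) (c : ℕ → R) :
    (signedMonic n c - X ^ n).degree < (n : WithBot ℕ) := by
  rw [signedMonic, add_sub_cancel_left]
  refine (degree_sum_le _ _).trans_lt ((Finset.sup_lt_iff (WithBot.bot_lt_coe n)).2 fun i hi => ?_)
  exact (degree_C_mul_X_pow_le _ _).trans_lt
    (by have := Finset.mem_Icc.1 hi; exact WithBot.coe_lt_coe.2 (show n - i < n by omega))

theorem monic_signedMonic (n : ℕ) (c : ℕ → R) : (signedMonic n c).Monic := by
  simpa using monic_X_pow_add (degree_signedMonic_sub_X_pow_lt n c)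

theorem natDegree_signedMonic [Nontrivial R] (n : ℕ) (c : ℕ → R) :
    (signedMonic n c).natDegree = n := by
  simpa using natDegree_add_eq_left_of_degree_lt
    (p := X ^ n) ((degree_signedMonic_sub_X_pow_lt n c).trans_eq (degree_X_pow n).symm)

theorem multiset_prod_X_sub_C_eq_signedMonic (s : Multiset R) :
    (s.map fun t => X - C t).prod = signedMonic (Multiset.card s) s.esymm := by
  have hesymm_zero : s.esymm 0 = 1 := by simp [Multiset.esymm]
  rw [Multiset.prod_X_sub_X_eq_sum_esymm, Finset.range_eq_Ico,
    Finset.sum_eq_sum_Ico_succ_bot (Nat.succ_pos _), hesymm_zero]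
  simp only [signedMonic, zero_add, Nat.succ_eq_add_one, Finset.Ico_add_one_right_eq_Icc, pow_zero,
    map_one, one_mul, tsub_zero, map_mul, map_pow, map_neg, mul_assoc]

theorem signedMonic_congr {n : ℕ} {c d : ℕ → R} (h : ∀ i ∈ Finset.Icc 1 n, c i = d i) :
    signedMonic n c = signedMonic n d := by
  unfold signedMonic
  congr 1
  exact Finset.sum_congr rfl fun i hi => by rw [h i hi]

theorem prod_X_sub_C_eq_signedMonic_aeval_esymm {A : Type*} [CommRing A] [Algebra A R] {n : ℕ}
    (x : Fin n → R) :
    ∏ k, (X - C (x k))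
      = signedMonic n (fun i => MvPolynomial.aeval x (MvPolynomial.esymm (Fin n) A i)) := by
  simp_rw [MvPolynomial.aeval_esymm_eq_multiset_esymm]
  have h := multiset_prod_X_sub_C_eq_signedMonic (Finset.univ.val.map x)
  rw [Multiset.map_map, Multiset.card_map, Finset.card_val, Finset.card_univ, Fintype.card_fin] at h
  exact (Finset.prod_eq_multiset_prod _ _).trans h

end Polynomial

theorem charpoly_mulModMatrix_signedMonic_esymmMem {A : Type*} [CommRing A] [Nontrivial A]
    {n : ℕ} (f : A[X]) :
    (mulModMatrix (signedMonic n (esymmMem A n))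
        (f.map (algebraMap A (symmetricSubalgebra (Fin n) A))) n).charpoly
      = signedMonic n (esymmSubst f) := by
  let ι := (symmetricSubalgebra (Fin n) A).val
  have hG : signedMonic n (ι ∘ esymmMem A n)
      = ∏ k, (Polynomial.X - Polynomial.C (X k : MvPolynomial (Fin n) A)) := by
    rw [prod_X_sub_C_eq_signedMonic_aeval_esymm (A := A)]
    simp only [ι, esymmMem, Function.comp_def, Subalgebra.coe_val, MvPolynomial.aeval_X_left_apply]
  apply Polynomial.map_injective (ι : symmetricSubalgebra (Fin n) A →+* MvPolynomial (Fin n) A)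
    Subtype.val_injective
  rw [← Matrix.charpoly_map, mulModMatrix_map _ (monic_signedMonic _ _), signedMonic_map,
    signedMonic_map, Polynomial.map_map, AlgHom.comp_algebraMap, hG,
    charpoly_mulModMatrix_prod_X_sub_C (det_vandermonde_X_mem_nonZeroDivisors n),
    prod_X_sub_C_eq_signedMonic_aeval_esymm (A := A)]
  simp only [eval_map_algebraMap]
  rfl

theorem charpoly_mul_adjoinRoot_eq_general {A : Type*} [CommRing A] {n : ℕ}
    (u : ℕ → A) (F : Polynomial A)
    (hFdef : F = Polynomial.X ^ n + ∑ i ∈ Finset.Icc 1 n, Polynomial.C ((-1) ^ i * u i) * Polynomial.X ^ (n - i))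
    (hF : F.Monic)
    (uF : symmetricSubalgebra (Fin n) A →ₐ[A] A)
    (huF : ∀ i ∈ Finset.Icc 1 n, uF (esymmMem A n i) = u i)
    (f : Polynomial A) :
    (LinearMap.toMatrix (AdjoinRoot.powerBasis' hF).basis (AdjoinRoot.powerBasis' hF).basis
        (LinearMap.mulLeft A (AdjoinRoot.mk F f))).charpoly
      = Polynomial.X ^ n + ∑ i ∈ Finset.Icc 1 n,
        Polynomial.C ((-1) ^ i * uF (esymmSubst f i)) * Polynomial.X ^ (n - i) := by
  nontriviality A
  change _ = signedMonic n (uF ∘ esymmSubst f)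
  change F = signedMonic n u at hFdef
  have hdeg : F.natDegree = n := hFdef ▸ natDegree_signedMonic n u
  have hFuF : (signedMonic n (esymmMem A n)).map uF = F := by
    rw [signedMonic_map, hFdef]
    exact signedMonic_congr huF
  have hfuF : (f.map (algebraMap A (symmetricSubalgebra (Fin n) A))).map uF = f := by
    rw [Polynomial.map_map, AlgHom.comp_algebraMap, Algebra.algebraMap_self, Polynomial.map_id]
  rw [charpoly_toMatrix_mulLeft_adjoinRoot hF f hdeg, ← signedMonic_map,
    ← charpoly_mulModMatrix_signedMonic_esymmMem, ← Matrix.charpoly_map,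
    mulModMatrix_map _ (monic_signedMonic _ _), hFuF, hfuF]

/-- Let `F(X) = X^n - u_1 X^{n-1} + … + (-1)^n u_n` be monic of positive degree `n` and let
`u_F` be an `A`-algebra homomorphism from the symmetric subalgebra of `A[X_1, …, X_n]` to `A`
with `u_F(e_i) = u_i`.  Then for every `f ∈ A[X]` the characteristic polynomial of
multiplication by `f` on `A[X]/(F)` (computed in the basis `1, X, …, X^{n-1}`) is
`Z^n + Σ_{i=1}^n (-1)^i u_F(e_i(f(X_1), …, f(X_n))) Z^{n-i}`. -/
theorem charpoly_mul_adjoinRoot_eq {A : Type*} [CommRing A] {n : ℕ} (hn : 0 < n)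
    (u : ℕ → A) (F : Polynomial A)
    (hFdef : F = Polynomial.X ^ n + ∑ i ∈ Finset.Icc 1 n, Polynomial.C ((-1) ^ i * u i) * Polynomial.X ^ (n - i))
    (hF : F.Monic)
    (uF : symmetricSubalgebra (Fin n) A →ₐ[A] A)
    (huF : ∀ i ∈ Finset.Icc 1 n, uF (esymmMem A n i) = u i)
    (f : Polynomial A) :
    (LinearMap.toMatrix (AdjoinRoot.powerBasis' hF).basis (AdjoinRoot.powerBasis' hF).basis
        (LinearMap.mulLeft A (AdjoinRoot.mk F f))).charpoly
      = Polynomial.X ^ n + ∑ i ∈ Finset.Icc 1 n,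
        Polynomial.C ((-1) ^ i * uF (esymmSubst f i)) * Polynomial.X ^ (n - i) :=
  charpoly_mul_adjoinRoot_eq_general u F hFdef hF uF huF f
end

section
/- Let A be a commutative ring, F(X) = X^n - u_1 X^{n-1} + … + (-1)^n u_n a monic polynomial of positive degree n in A[X], and let u_F be any A-algebra homomorphism from the symmetric subalgebra of A[X_1, …, X_n] to A satisfying u_F(e_i) = u_i for i = 1, …, n. Then for every f ∈ A[X], the determinant of the A-linear endomorphism μ_F(f) of A[X]/(F(X)) given by multiplication by the residue class of f equals u_F(∏_{i=1}^n f(X_i)) (note that ∏_{i=1}^n f(X_i) is a symmetric polynomial, i.e., the symmetric tensor f ⊗ … ⊗ f). -/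
open MvPolynomial

/-- The symmetric tensor `f ⊗ … ⊗ f`, i.e. `∏_{i=1}^n f(X_i)`, as an element of the symmetric
subalgebra of `A[X_1, …, X_n]`. -/
noncomputable def prodSubst {A : Type*} [CommRing A] {n : ℕ} (f : Polynomial A) :
    symmetricSubalgebra (Fin n) A :=
  ⟨∏ i : Fin n, Polynomial.aeval (MvPolynomial.X i : MvPolynomial (Fin n) A) f,
   (mem_symmetricSubalgebra _).2 (by
      have h : (∏ i : Fin n, Polynomial.aeval (MvPolynomial.X i : MvPolynomial (Fin n) A) f)
          = MvPolynomial.aeval (R := A)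
              (fun j => Polynomial.aeval (MvPolynomial.X j : MvPolynomial (Fin n) A) f)
              (∏ i : Fin n, MvPolynomial.X i) := by
        rw [map_prod]
        simp
      rw [h]
      exact subst_isSymmetric f (by
        intro e
        rw [map_prod]
        simp only [rename_X]
        exact Equiv.prod_comp e _))⟩

/-!
The determinant is the norm `N(f)` of `f` in `A[X]/(F)`. This norm commutes with base change of
the coefficient ring, and it is multiplicative in the modulus: for monic `F` and `G`,
multiplication by `G` embeds `R[X]/(F)` into `R[X]/(FG)` with cokernel `R[X]/(G)`, and
multiplication by `f` respects this short exact sequence of free modules. Hence, over any ring,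
the norm of `f` modulo `∏ (X - tᵢ)` is `∏ f(tᵢ)`. Now `F` is the image under `u_F` of the
polynomial `V` over the symmetric subalgebra `S` with coefficients `±eᵢ`, so
`N(f) = u_F(N_S(f))`; and `V` splits over `A[X₁, …, Xₙ] ⊇ S` as `∏ (X - Xᵢ)`, so
`N_S(f) = ∏ f(Xᵢ)`.
-/

open Polynomial

namespace Polynomial

variable {R S : Type*} [CommRing R] [CommRing S]

/-- The monic polynomial whose roots have elementary symmetric functions `c 1, …, c n`. -/
noncomputable def vieta (n : ℕ) (c : ℕ → R) : R[X] :=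
  X ^ n + ∑ i ∈ Finset.Icc 1 n, C ((-1) ^ i * c i) * X ^ (n - i)

theorem vieta_map (φ : R →+* S) (n : ℕ) (c : ℕ → R) :
    (vieta n c).map φ = vieta n (fun i ↦ φ (c i)) := by
  simp [vieta, Polynomial.map_sum]

theorem monic_vieta (n : ℕ) (c : ℕ → R) : (vieta n c).Monic := by
  refine monic_X_pow_add ((degree_sum_le _ _).trans_lt ?_)
  refine (Finset.sup_lt_iff (WithBot.bot_lt_coe n)).mpr fun i hi ↦ ?_
  refine (degree_C_mul_X_pow_le _ _).trans_lt (Nat.cast_lt.mpr ?_)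
  obtain ⟨h1, h2⟩ := Finset.mem_Icc.mp hi
  omega

theorem vieta_esymm (σ : Type*) [Fintype σ] (A : Type*) [CommRing A] :
    vieta (Fintype.card σ) (esymm σ A) = ∏ i : σ, (X - C (MvPolynomial.X i)) := by
  have h := Multiset.prod_X_sub_X_eq_sum_esymm
    ((Finset.univ : Finset σ).val.map (MvPolynomial.X (R := A)))
  rw [Multiset.map_map, ← esymm_eq_multiset_esymm, Multiset.card_map, Finset.card_val,
    Finset.card_univ] at h
  have hrange : Finset.range (Fintype.card σ + 1) = insert 0 (Finset.Icc 1 (Fintype.card σ)) := by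
    ext
    simp only [Finset.mem_range, Finset.mem_insert, Finset.mem_Icc]
    omega
  simp only [Function.comp_def] at h
  rw [Finset.prod_eq_multiset_prod, h, hrange, Finset.sum_insert (by simp), vieta]
  simp [mul_assoc]

end Polynomial

namespace AdjoinRoot

variable {R S : Type*} [CommRing R] [CommRing S] {F G : R[X]}

theorem leftMulMatrix_powerBasis'_mk (hF : F.Monic) (g : R[X]) (i j : Fin (powerBasis' hF).dim) :
    Algebra.leftMulMatrix (powerBasis' hF).basis (mk F g) i j =
      ((g * Polynomial.X ^ (j : ℕ)) %ₘ F).coeff i := by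
  rw [Algebra.leftMulMatrix_eq_repr_mul, PowerBasis.basis_eq_pow, powerBasis'_gen, ← mk_X,
    ← map_pow, ← map_mul]
  rfl

theorem norm_mk_map (φ : R →+* S) (hF : F.Monic) (g : R[X]) :
    Algebra.norm S (mk (F.map φ) (g.map φ)) = φ (Algebra.norm R (mk F g)) := by
  nontriviality S
  let e : Fin (powerBasis' (hF.map φ)).dim ≃ Fin (powerBasis' hF).dim :=
    finCongr (hF.natDegree_map φ)
  rw [Algebra.norm_eq_matrix_det (powerBasis' hF).basis, RingHom.map_det,
    Algebra.norm_eq_matrix_det (powerBasis' (hF.map φ)).basis, ← Matrix.det_reindex_self e]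
  congr 1
  ext i j
  simp only [Matrix.reindex_apply, Matrix.submatrix_apply, RingHom.mapMatrix_apply,
    Matrix.map_apply, leftMulMatrix_powerBasis'_mk]
  rw [← Polynomial.coeff_map, map_modByMonic _ hF, Polynomial.map_mul, Polynomial.map_pow,
    Polynomial.map_X]
  rfl

theorem norm_mk_one (g : R[X]) : Algebra.norm R (mk 1 g) = 1 := by
  have : Subsingleton (AdjoinRoot (1 : R[X])) :=
    subsingleton_of_forall_eq 0 fun x ↦ by
      induction x using induction_on with | ih p => exact mk_eq_zero.mpr (one_dvd p)
  rw [Algebra.norm_apply, LinearMap.det_eq_one_of_subsingleton]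

theorem norm_mk_X_sub_C (t : R) (g : R[X]) :
    Algebra.norm R (mk (Polynomial.X - Polynomial.C t) g) = g.eval t := by
  nontriviality R
  have hg : mk (Polynomial.X - Polynomial.C t) g = algebraMap R _ (g.eval t) :=
    mk_eq_mk.mpr X_sub_C_dvd_sub_C_eval
  rw [hg, Algebra.norm_algebraMap_of_basis (powerBasis' (monic_X_sub_C t)).basis,
    Fintype.card_fin, powerBasis'_dim, natDegree_X_sub_C, pow_one]

theorem algHomOfDvd_mk {f : R[X]} (hGf : G ∣ f) (p : R[X]) :
    algHomOfDvd R f G hGf (mk f p) = mk G p := by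
  rw [← aeval_eq, ← Polynomial.aeval_algHom_apply, algHomOfDvd_root, aeval_eq]

noncomputable def mulFactor (hF : F.Monic) (G : R[X]) : AdjoinRoot F →ₗ[R] AdjoinRoot (F * G) :=
  LinearMap.mulLeft R (mk (F * G) G) ∘ₗ (mkₐ (F * G)).toLinearMap ∘ₗ modByMonicHom hF

theorem mulFactor_mk (hF : F.Monic) (p : R[X]) :
    mulFactor hF G (mk F p) = mk (F * G) (p * G) := by
  simp only [mulFactor, LinearMap.comp_apply, modByMonicHom_mk, AlgHom.toLinearMap_apply, coe_mkₐ,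
    LinearMap.mulLeft_apply, ← map_mul, mul_comm G, mk_eq_mk, ← sub_mul]
  exact ⟨-(p /ₘ F), by linear_combination G * modByMonic_add_div p F⟩

theorem mulFactor_mul (hF : F.Monic) (g : R[X]) (x : AdjoinRoot F) :
    mulFactor hF G (mk F g * x) = mk (F * G) g * mulFactor hF G x := by
  induction x using induction_on with | ih p =>
  rw [← map_mul, mulFactor_mk, mulFactor_mk, ← map_mul, mul_assoc]

theorem mulFactor_injective (hF : F.Monic) (hG : G.Monic) :
    Function.Injective (mulFactor hF G) := by
  rw [← LinearMap.ker_eq_bot, LinearMap.ker_eq_bot']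
  intro x hx
  induction x using induction_on with | ih p =>
  obtain ⟨q, hq⟩ := mk_eq_zero.mp ((mulFactor_mk hF p).symm.trans hx)
  refine mk_eq_zero.mpr ⟨q, sub_eq_zero.mp (hG.mul_left_eq_zero_iff.mp ?_)⟩
  rw [sub_mul, hq]
  ring

theorem range_mulFactor (hF : F.Monic) :
    LinearMap.range (mulFactor hF G) =
      LinearMap.ker (algHomOfDvd R (F * G) G (dvd_mul_left G F)).toLinearMap := by
  ext x
  induction x using induction_on with | ih q =>
  simp only [LinearMap.mem_range, LinearMap.mem_ker, AlgHom.toLinearMap_apply, algHomOfDvd_mk,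
    mk_eq_zero]
  constructor
  · rintro ⟨y, hy⟩
    induction y using induction_on with | ih p =>
    rw [mulFactor_mk, mk_eq_mk] at hy
    exact (dvd_sub_right (dvd_mul_left G p)).mp ((dvd_mul_left G F).trans hy)
  · rintro ⟨p, rfl⟩
    exact ⟨mk F p, by rw [mulFactor_mk, mul_comm p]⟩

theorem norm_mk_mul (hF : F.Monic) (hG : G.Monic) (g : R[X]) :
    Algebra.norm R (mk (F * G) g) = Algebra.norm R (mk F g) * Algebra.norm R (mk G g) := by
  let π := (algHomOfDvd R (F * G) G (dvd_mul_left G F)).toLinearMap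
  let W := LinearMap.ker π
  have hπ : Function.Surjective π := fun y ↦ by
    induction y using induction_on with
    | ih p => exact ⟨mk (F * G) p, algHomOfDvd_mk (dvd_mul_left G F) p⟩
  let eW : AdjoinRoot F ≃ₗ[R] W := (LinearEquiv.ofInjective _ (mulFactor_injective hF hG)).trans
    (LinearEquiv.ofEq _ _ (range_mulFactor hF))
  let eQ : (AdjoinRoot (F * G) ⧸ W) ≃ₗ[R] AdjoinRoot G := π.quotKerEquivOfSurjective hπ
  have hEQ (y) : eQ (Submodule.Quotient.mk y) = π y := π.quotKerEquivOfSurjective_apply_mk hπ y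
  have := hF.free_adjoinRoot
  have := hG.free_adjoinRoot
  have := hF.finite_adjoinRoot
  have := (hF.mul hG).finite_adjoinRoot
  have : Module.Free R W := .of_equiv eW
  have : Module.Finite R W := .equiv eW
  have : Module.Free R (_ ⧸ W) := .of_equiv eQ.symm
  let μ := Algebra.lmul R _ (mk (F * G) g)
  have hW : W ≤ W.comap μ := fun x hx ↦ by simp_all [W, π, μ]
  rw [Algebra.norm_apply, LinearMap.det_eq_det_mul_det W μ hW, Algebra.norm_apply,
    Algebra.norm_apply, ← LinearMap.det_conj _ eW, ← LinearMap.det_conj _ eQ.symm]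
  congr 2
  · ext w
    obtain ⟨y, rfl⟩ := eW.surjective w
    simp [eW, μ, mulFactor_mul]
  · ext x
    apply eQ.injective
    simp only [LinearMap.comp_apply, LinearEquiv.symm_symm, LinearEquiv.coe_coe,
      LinearEquiv.apply_symm_apply, Submodule.mkQ_apply, Submodule.mapQ_apply]
    rw [hEQ, hEQ]
    change π (mk (F * G) g * x) = mk G g * π x
    rw [AlgHom.toLinearMap_apply, AlgHom.toLinearMap_apply, map_mul, algHomOfDvd_mk]

theorem norm_mk_prod_X_sub_C {ι : Type*} (s : Finset ι) (t : ι → R) (g : R[X]) :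
    Algebra.norm R (mk (∏ i ∈ s, (Polynomial.X - Polynomial.C (t i))) g) =
      ∏ i ∈ s, g.eval (t i) := by
  classical
  induction s using Finset.induction_on with
  | empty => rw [Finset.prod_empty, Finset.prod_empty, norm_mk_one]
  | insert a s ha ih =>
    rw [Finset.prod_insert ha, Finset.prod_insert ha,
      norm_mk_mul (monic_X_sub_C _) (monic_prod_of_monic _ _ fun i _ ↦ monic_X_sub_C _),
      norm_mk_X_sub_C, ih]

end AdjoinRoot

theorem norm_mk_vieta_esymmMem {A : Type*} [CommRing A] (n : ℕ) (f : A[X]) :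
    Algebra.norm (symmetricSubalgebra (Fin n) A) (AdjoinRoot.mk (vieta n (esymmMem A n))
      (f.map (algebraMap A _))) = prodSubst f := by
  let ι := (symmetricSubalgebra (Fin n) A).val.toRingHom
  have hroots : (vieta n (esymmMem A n)).map ι =
      ∏ i : Fin n, (Polynomial.X - Polynomial.C (MvPolynomial.X i)) := by
    rw [vieta_map]
    change vieta n (esymm (Fin n) A) = _
    simpa using vieta_esymm (Fin n) A
  have hf : (f.map (algebraMap A _)).map ι = f.map (algebraMap A (MvPolynomial (Fin n) A)) := by
    rw [Polynomial.map_map]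
    rfl
  apply Subtype.val_injective
  change ι _ = _
  rw [← AdjoinRoot.norm_mk_map ι (monic_vieta n _), hroots, hf, AdjoinRoot.norm_mk_prod_X_sub_C]
  simp only [eval_map_algebraMap]
  rfl

theorem det_mul_adjoinRoot_eq_general {A : Type*} [CommRing A] {n : ℕ}
    (u : ℕ → A) (F : Polynomial A)
    (hFdef : F = Polynomial.X ^ n
        + ∑ i ∈ Finset.Icc 1 n, Polynomial.C ((-1) ^ i * u i) * Polynomial.X ^ (n - i))
    (hF : F.Monic)
    (uF : symmetricSubalgebra (Fin n) A →ₐ[A] A)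
    (huF : ∀ i ∈ Finset.Icc 1 n, uF (esymmMem A n i) = u i)
    (f : Polynomial A) :
    (LinearMap.toMatrix (AdjoinRoot.powerBasis' hF).basis (AdjoinRoot.powerBasis' hF).basis
        (LinearMap.mulLeft A (AdjoinRoot.mk F f))).det
      = uF (prodSubst f) := by
  have hFvieta : (vieta n (esymmMem A n)).map (uF : symmetricSubalgebra (Fin n) A →+* A) = F := by
    rw [vieta_map, hFdef, vieta]
    congr 1
    exact Finset.sum_congr rfl fun i hi ↦ by rw [AlgHom.coe_toRingHom, huF i hi]
  have hf : (f.map (algebraMap A _)).map (uF : symmetricSubalgebra (Fin n) A →+* A) = f := by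
    rw [Polynomial.map_map, AlgHom.comp_algebraMap, Algebra.algebraMap_self, Polynomial.map_id]
  have h := AdjoinRoot.norm_mk_map (uF : symmetricSubalgebra (Fin n) A →+* A)
    (monic_vieta n (esymmMem A n)) (f.map (algebraMap A _))
  rw [hFvieta, hf, norm_mk_vieta_esymmMem] at h
  rw [LinearMap.det_toMatrix]
  exact h

/-- Let `F(X) = X^n - u_1 X^{n-1} + … + (-1)^n u_n` be monic of positive degree `n`, and let
`u_F` be an `A`-algebra homomorphism from the symmetric subalgebra of `A[X_1, …, X_n]` to `A`
with `u_F(e_i) = u_i`.  Then for every `f ∈ A[X]` the determinant of multiplication by `f` on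
`A[X]/(F)` (computed in the basis `1, X, …, X^{n-1}`) equals `u_F(∏_{i=1}^n f(X_i))`. -/
theorem det_mul_adjoinRoot_eq {A : Type*} [CommRing A] {n : ℕ} (hn : 0 < n)
    (u : ℕ → A) (F : Polynomial A)
    (hFdef : F = Polynomial.X ^ n
        + ∑ i ∈ Finset.Icc 1 n, Polynomial.C ((-1) ^ i * u i) * Polynomial.X ^ (n - i))
    (hF : F.Monic)
    (uF : symmetricSubalgebra (Fin n) A →ₐ[A] A)
    (huF : ∀ i ∈ Finset.Icc 1 n, uF (esymmMem A n i) = u i)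
    (f : Polynomial A) :
    (LinearMap.toMatrix (AdjoinRoot.powerBasis' hF).basis (AdjoinRoot.powerBasis' hF).basis
        (LinearMap.mulLeft A (AdjoinRoot.mk F f))).det
      = uF (prodSubst f) :=
  det_mul_adjoinRoot_eq_general u F hFdef hF uF huF f
end

section
/- Let A be a commutative ring and let P(X) and Q(X) be monic polynomials in A[X] of positive degrees p and q respectively. Then N_P(Q(X)) = (-1)^{pq} · N_Q(P(X)); that is, the determinant of the A-linear endomorphism of A[X]/(P) given by multiplication by the residue class of Q equals (-1)^{pq} times the determinant of the A-linear endomorphism of A[X]/(Q) given by multiplication by the residue class of P. -/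
/-!
Both sides commute with base change, so it suffices to compare each with the resultant
`Res(P, Q)`, which satisfies `Res(P, Q) = (-1)^{pq} Res(Q, P)`. Passing to a universal coefficient
ring, its fraction field and a splitting field, we may assume that we are over a field and that
`Q = ∏ (X - β)` splits. Then multiplicativity of the determinant gives `N_P(Q) = ∏ N_P(X - β)`,
and `N_P(X - β) = (-1)^p P(β)` because `P` is the characteristic polynomial of multiplication by
`X` on `A[X]/(P)`; thus `N_P(Q) = (-1)^{pq} ∏ P(β) = (-1)^{pq} Res(Q, P) = Res(P, Q)`.
-/

open Polynomial Matrix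

namespace Polynomial

variable {A : Type*} [CommRing A]

/-- The matrix of multiplication by `f` on `A[X]/(P)` in the basis `1, X, …, X^(n-1)`, where
`n = P.natDegree` is intended; keeping `n` separate makes the matrix commute with base change
on the nose. -/
noncomputable def modMulMatrix (n : ℕ) (P f : A[X]) : Matrix (Fin n) (Fin n) A :=
  fun i j => ((f * X ^ (j : ℕ)) %ₘ P).coeff i

lemma leftMulMatrix_mk_eq_modMulMatrix {P : A[X]} (hP : P.Monic) (f : A[X]) :
    Algebra.leftMulMatrix (AdjoinRoot.powerBasis' hP).basis (AdjoinRoot.mk P f)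
      = modMulMatrix P.natDegree P f := by
  ext i j
  have hb : (AdjoinRoot.powerBasis' hP).basis j = AdjoinRoot.mk P (X ^ (j : ℕ)) := by
    rw [(AdjoinRoot.powerBasis' hP).basis_eq_pow, AdjoinRoot.powerBasis'_gen, ← AdjoinRoot.mk_X,
      ← map_pow]
  rw [Algebra.leftMulMatrix_eq_repr_mul, hb, ← map_mul]
  exact (AdjoinRoot.powerBasisAux'_repr_apply_to_fun hP _ i).trans
    (congrArg (coeff · i) (AdjoinRoot.modByMonicHom_mk hP _))

lemma det_toMatrix_mulLeft_mk {P : A[X]} (hP : P.Monic) (f : A[X]) :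
    (LinearMap.toMatrix (AdjoinRoot.powerBasis' hP).basis (AdjoinRoot.powerBasis' hP).basis
      (LinearMap.mulLeft A (AdjoinRoot.mk P f))).det = (modMulMatrix P.natDegree P f).det :=
  congrArg det (leftMulMatrix_mk_eq_modMulMatrix hP f)

lemma modMulMatrix_eq_aeval_leftMulMatrix_root {P : A[X]} (hP : P.Monic) (f : A[X]) :
    modMulMatrix P.natDegree P f
      = aeval (Algebra.leftMulMatrix (AdjoinRoot.powerBasis' hP).basis (AdjoinRoot.root P)) f := by
  rw [← leftMulMatrix_mk_eq_modMulMatrix, ← AdjoinRoot.aeval_eq, ← aeval_algHom_apply]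

lemma modMulMatrix_map {B : Type*} [CommRing B] (φ : A →+* B) {P : A[X]} (hP : P.Monic)
    (f : A[X]) (n : ℕ) : modMulMatrix n (P.map φ) (f.map φ) = (modMulMatrix n P f).map φ := by
  ext i j
  rw [modMulMatrix, Matrix.map_apply, modMulMatrix, ← map_X φ, ← Polynomial.map_pow,
    ← Polynomial.map_mul, ← map_modByMonic φ hP, coeff_map]

lemma det_modMulMatrix_sub_resultant_map {B : Type*} [CommRing B] (φ : A →+* B) {P : A[X]}
    (hP : P.Monic) (Q : A[X]) :
    (modMulMatrix P.natDegree (P.map φ) (Q.map φ)).det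
        - resultant (P.map φ) (Q.map φ) P.natDegree Q.natDegree
      = φ ((modMulMatrix P.natDegree P Q).det - resultant P Q) := by
  rw [modMulMatrix_map φ hP, ← RingHom.mapMatrix_apply,
    ← RingHom.map_det, resultant_map_map, map_sub]

section Field

variable {K : Type*} [Field K]

lemma det_leftMulMatrix_root_sub_scalar {P : K[X]} (hP : P.Monic) (β : K) :
    (Algebra.leftMulMatrix (AdjoinRoot.powerBasis' hP).basis (AdjoinRoot.root P)
      - scalar _ β).det = (-1) ^ P.natDegree * P.eval β := by
  rw [← neg_sub, det_neg, Fintype.card_fin, ← eval_charpoly, ← AdjoinRoot.powerBasis'_gen hP,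
    charpoly_leftMulMatrix, AdjoinRoot.powerBasis'_gen, AdjoinRoot.minpoly_root hP.ne_zero,
    hP.leadingCoeff, inv_one, C_1, mul_one, AdjoinRoot.powerBasis'_dim]

lemma det_modMulMatrix_of_splits {P Q : K[X]} (hP : P.Monic) (hQ : Q.Monic) (hQs : Q.Splits) :
    (modMulMatrix P.natDegree P Q).det
      = (-1) ^ (P.natDegree * Q.natDegree) * (Q.roots.map P.eval).prod := by
  set M := Algebra.leftMulMatrix (AdjoinRoot.powerBasis' hP).basis (AdjoinRoot.root P)
  let detAeval : K[X] →* K := detMonoidHom.comp (aeval M).toMonoidHom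
  have hlinear (β : K) : detAeval (X - C β) = (-1) ^ P.natDegree * P.eval β := by
    simp [detAeval, M, ← det_leftMulMatrix_root_sub_scalar hP β, Algebra.algebraMap_eq_smul_one,
      smul_one_eq_diagonal]
  calc (modMulMatrix P.natDegree P Q).det = detAeval Q :=
        congrArg det (modMulMatrix_eq_aeval_leftMulMatrix_root hP Q)
    _ = (Q.roots.map fun β => (-1) ^ P.natDegree * P.eval β).prod := by
        conv_lhs => rw [hQs.eq_prod_roots_of_monic hQ]
        rw [map_multiset_prod, Multiset.map_map]
        exact congrArg _ (Multiset.map_congr rfl fun β _ => hlinear β)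
    _ = (-1) ^ (P.natDegree * Q.natDegree) * (Q.roots.map P.eval).prod := by
        rw [Multiset.prod_map_mul, Multiset.map_const', Multiset.prod_replicate,
          ← hQs.natDegree_eq_card_roots, pow_mul]

lemma det_modMulMatrix_eq_resultant_of_splits {P Q : K[X]} (hP : P.Monic) (hQ : Q.Monic)
    (hQs : Q.Splits) : (modMulMatrix P.natDegree P Q).det = resultant P Q := by
  rw [det_modMulMatrix_of_splits hP hQ hQs, resultant_comm,
    resultant_eq_prod_eval Q P P.natDegree le_rfl hQs, hQ.leadingCoeff, one_pow, one_mul]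

end Field

theorem det_modMulMatrix_eq_resultant {P Q : A[X]} (hP : P.Monic) (hQ : Q.Monic) :
    (modMulMatrix P.natDegree P Q).det = resultant P Q := by
  refine induction_of_Splits_of_injective_of_surjective Q
    (fun {R} _ Q => Q.Monic → ∀ P : R[X], P.Monic →
      (modMulMatrix P.natDegree P Q).det = resultant P Q)
    ?_ ?_ ?_ hQ P hP
  · intro K _ Q hQs hQ P hP
    exact det_modMulMatrix_eq_resultant_of_splits hP hQ hQs
  · intro R S _ _ φ hφ Q IH hQ P hP
    have hmap := IH (hQ.map φ) _ (hP.map φ)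
    rw [natDegree_map_eq_of_injective hφ, natDegree_map_eq_of_injective hφ] at hmap
    rw [← sub_eq_zero, ← map_eq_zero_iff φ hφ, ← det_modMulMatrix_sub_resultant_map φ hP Q,
      hmap, sub_self]
  · intro R S _ _ φ hφ Q IH hQ P hP
    have hlifts (F : S[X]) : F ∈ lifts φ := map_surjective φ hφ F
    obtain ⟨Q', rfl, hdegQ, hQ'⟩ := lifts_and_natDegree_eq_and_monic (hlifts Q) hQ
    obtain ⟨P', rfl, hdegP, hP'⟩ := lifts_and_natDegree_eq_and_monic (hlifts P) hP
    have h := det_modMulMatrix_sub_resultant_map φ hP' Q'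
    rw [IH Q' hQ' P' hP', sub_self, map_zero, sub_eq_zero, hdegP, hdegQ] at h
    exact h

end Polynomial

theorem norm_reciprocity_general {A : Type*} [CommRing A] {P Q : Polynomial A}
    (hP : P.Monic) (hQ : Q.Monic) :
    (LinearMap.toMatrix (AdjoinRoot.powerBasis' hP).basis (AdjoinRoot.powerBasis' hP).basis
        (LinearMap.mulLeft A (AdjoinRoot.mk P Q))).det
      = (-1) ^ (P.natDegree * Q.natDegree) *
        (LinearMap.toMatrix (AdjoinRoot.powerBasis' hQ).basis (AdjoinRoot.powerBasis' hQ).basis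
          (LinearMap.mulLeft A (AdjoinRoot.mk Q P))).det := by
  rw [det_toMatrix_mulLeft_mk, det_toMatrix_mulLeft_mk,
    det_modMulMatrix_eq_resultant hP hQ, det_modMulMatrix_eq_resultant hQ hP, resultant_comm]

/-- For monic polynomials `P, Q ∈ A[X]` of positive degrees `p` and `q`,
`N_P(Q) = (-1)^{pq} N_Q(P)`: the determinant of multiplication by `Q` on `A[X]/(P)` equals
`(-1)^{pq}` times the determinant of multiplication by `P` on `A[X]/(Q)` (determinants computed
in the bases `1, X, …`). -/
theorem norm_reciprocity {A : Type*} [CommRing A] {P Q : Polynomial A}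
    (hP : P.Monic) (hQ : Q.Monic) (hp : 0 < P.natDegree) (hq : 0 < Q.natDegree) :
    (LinearMap.toMatrix (AdjoinRoot.powerBasis' hP).basis (AdjoinRoot.powerBasis' hP).basis
        (LinearMap.mulLeft A (AdjoinRoot.mk P Q))).det
      = (-1) ^ (P.natDegree * Q.natDegree) *
        (LinearMap.toMatrix (AdjoinRoot.powerBasis' hQ).basis (AdjoinRoot.powerBasis' hQ).basis
          (LinearMap.mulLeft A (AdjoinRoot.mk Q P))).det :=
  norm_reciprocity_general hP hQ
end

section
/- Let A be a commutative ring, U a multiplicatively closed subset of A[X] containing 1, and F ∈ A[X] a monic polynomial of positive degree n. Then the following three assertions are equivalent: (1) the canonical map A[X]/(F) → A[X]_U/(F·A[X]_U) is an isomorphism; (2) the residue classes of 1, X, …, X^{n-1} modulo F·A[X]_U form a basis of A[X]_U/(F·A[X]_U) as an A-module; (3) for every f ∈ U, the norm N_F(f) is a unit in A. -/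
/-!
Reducing modulo `F` commutes with localizing at `U`, so `A[X]_U/(F)` is the localization of
`A[X]/(F)` at the image of `U`, and the canonical map is an isomorphism exactly when every
`f ∈ U` is already invertible modulo `F`. As `A[X]/(F)` is free over `A` with basis
`1, X, …, X^{n-1}`, this invertibility is that of the norm `N_F(f)`, and bijectivity of an
`A`-linear map out of it says that the image of this basis is again a basis.
-/

open Polynomial

theorem span_le_comap_span_localization {A : Type*} [CommRing A]
    (U : Submonoid (Polynomial A)) (F : Polynomial A) :
    Ideal.span {F} ≤
      (Ideal.span {algebraMap (Polynomial A) (Localization U) F}).comap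
        (algebraMap (Polynomial A) (Localization U)) :=
  Ideal.span_le.2 (Set.singleton_subset_iff.2 (Ideal.mem_comap.2 (Ideal.subset_span rfl)))

theorem Module.Basis.bijective_iff_linearIndependent_and_span_eq_top {R M N ι : Type*}
    [CommRing R] [AddCommGroup M] [AddCommGroup N] [Module R M] [Module R N]
    (b : Module.Basis ι R M) (f : M →ₗ[R] N) :
    Function.Bijective f ↔
      LinearIndependent R (f ∘ b) ∧ Submodule.span R (Set.range (f ∘ b)) = ⊤ := by
  refine ⟨fun hf => ⟨b.linearIndependent.map' f (LinearMap.ker_eq_bot.mpr hf.injective), ?_⟩,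
    fun ⟨hli, hsp⟩ =>
      LinearMap.bijective_of_linearIndependent_of_span_eq_top b.span_eq hli hsp⟩
  rw [Set.range_comp, ← Submodule.map_span, b.span_eq, Submodule.map_top,
    LinearMap.range_eq_top]
  exact hf.surjective

theorem Module.Basis.isUnit_det_toMatrix_mulLeft_iff {A B ι : Type*} [CommRing A] [CommRing B]
    [Algebra A B] [Fintype ι] [DecidableEq ι] (b : Module.Basis ι A B) (x : B) :
    IsUnit (LinearMap.toMatrix b b (LinearMap.mulLeft A x)).det ↔ IsUnit x := by
  rw [← Matrix.isUnit_iff_isUnit_det, LinearMap.isUnit_toMatrix_iff]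
  exact Algebra.lmul_isUnit_iff

theorem IsLocalization.bijective_algebraMap_iff {R S : Type*} [CommRing R] [CommRing S]
    [Algebra R S] (M : Submonoid R) [IsLocalization M S] :
    Function.Bijective (algebraMap R S) ↔ ∀ m ∈ M, IsUnit m :=
  ⟨fun h m hm => (MulEquiv.isUnit_map (RingEquiv.ofBijective _ h)).mp (map_units S ⟨m, hm⟩),
    fun h => (atUnits R M (S := S) h).bijective⟩

theorem IsLocalization.bijective_quotientMap_iff {R S : Type*} [CommRing R] [CommRing S]
    [Algebra R S] (M : Submonoid R) [IsLocalization M S] (I : Ideal R) (J : Ideal S)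
    (hJ : J = I.map (algebraMap R S)) (h : I ≤ J.comap (algebraMap R S)) :
    Function.Bijective (Ideal.quotientMap J (algebraMap R S) h) ↔
      ∀ m ∈ M, IsUnit (Ideal.Quotient.mk I m) := by
  subst hJ
  exact (bijective_algebraMap_iff (Algebra.algebraMapSubmonoid (R ⧸ I) M)
    (S := S ⧸ I.map (algebraMap R S))).trans
    ⟨fun H m hm => H _ ⟨m, hm, rfl⟩, by rintro H _ ⟨m, hm, rfl⟩; exact H m hm⟩

theorem tfae_fraction_map_iso_general {A : Type*} [CommRing A] (U : Submonoid (Polynomial A))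
    {F : Polynomial A} (hF : F.Monic) :
    List.TFAE
      [ Function.Bijective
          (Ideal.quotientMap (Ideal.span {algebraMap (Polynomial A) (Localization U) F})
            (algebraMap (Polynomial A) (Localization U))
            (span_le_comap_span_localization U F)),
        LinearIndependent A
            (fun i : Fin F.natDegree =>
              (Ideal.Quotient.mk (Ideal.span {algebraMap (Polynomial A) (Localization U) F})
                (algebraMap (Polynomial A) (Localization U) (X ^ (i : ℕ)))))
          ∧ Submodule.span A
              (Set.range fun i : Fin F.natDegree =>
                (Ideal.Quotient.mk (Ideal.span {algebraMap (Polynomial A) (Localization U) F})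
                  (algebraMap (Polynomial A) (Localization U) (X ^ (i : ℕ))))) = ⊤,
        ∀ f ∈ U, IsUnit
          (LinearMap.toMatrix (AdjoinRoot.powerBasis' hF).basis (AdjoinRoot.powerBasis' hF).basis
            (LinearMap.mulLeft A (AdjoinRoot.mk F f))).det ] := by
  let b := (AdjoinRoot.powerBasis' hF).basis
  let J := Ideal.span {algebraMap (Polynomial A) (Localization U) F}
  let ψ : AdjoinRoot F →ₐ[A] Localization U ⧸ J :=
    Ideal.quotientMapₐ J (IsScalarTower.toAlgHom A (Polynomial A) (Localization U))
      (span_le_comap_span_localization U F)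
  have hψb : ψ.toLinearMap ∘ b = fun i : Fin F.natDegree =>
      Ideal.Quotient.mk J (algebraMap (Polynomial A) (Localization U) (X ^ (i : ℕ))) := by
    funext i
    show ψ (b i) = _
    rw [PowerBasis.coe_basis, AdjoinRoot.powerBasis'_gen, map_pow, map_pow, map_pow]
    rfl
  tfae_have 1 ↔ 2 := by
    rw [← hψb]
    exact b.bijective_iff_linearIndependent_and_span_eq_top ψ.toLinearMap
  tfae_have 1 ↔ 3 := by
    refine (IsLocalization.bijective_quotientMap_iff U _ _ ?_ _).trans
      (forall₂_congr fun f _ => (b.isUnit_det_toMatrix_mulLeft_iff _).symm)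
    rw [Ideal.map_span, Set.image_singleton]
  tfae_finish

/-- Let `U ⊆ A[X]` be multiplicatively closed and `F ∈ A[X]` monic of positive degree `n`.
The following are equivalent:
1. the canonical map `A[X]/(F) → A[X]_U/(F·A[X]_U)` is an isomorphism;
2. the residue classes of `1, X, …, X^{n-1}` form a basis of the `A`-module
   `A[X]_U/(F·A[X]_U)`;
3. for every `f ∈ U`, the norm `N_F(f)` (the determinant of multiplication by `f` on
   `A[X]/(F)`, computed in the basis `1, X, …, X^{n-1}`) is a unit of `A`. -/
theorem tfae_fraction_map_iso {A : Type*} [CommRing A] (U : Submonoid (Polynomial A))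
    {F : Polynomial A} (hF : F.Monic) (hdeg : 0 < F.natDegree) :
    List.TFAE
      [ Function.Bijective
          (Ideal.quotientMap (Ideal.span {algebraMap (Polynomial A) (Localization U) F})
            (algebraMap (Polynomial A) (Localization U))
            (span_le_comap_span_localization U F)),
        LinearIndependent A
            (fun i : Fin F.natDegree =>
              (Ideal.Quotient.mk (Ideal.span {algebraMap (Polynomial A) (Localization U) F})
                (algebraMap (Polynomial A) (Localization U) (X ^ (i : ℕ)))))
          ∧ Submodule.span A
              (Set.range fun i : Fin F.natDegree =>
                (Ideal.Quotient.mk (Ideal.span {algebraMap (Polynomial A) (Localization U) F})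
                  (algebraMap (Polynomial A) (Localization U) (X ^ (i : ℕ))))) = ⊤,
        ∀ f ∈ U, IsUnit
          (LinearMap.toMatrix (AdjoinRoot.powerBasis' hF).basis (AdjoinRoot.powerBasis' hF).basis
            (LinearMap.mulLeft A (AdjoinRoot.mk F f))).det ] :=
  tfae_fraction_map_iso_general U hF
end

section
/- Let A be a local commutative ring with residue field K, let U be a multiplicatively closed subset of A[X] containing 1, and let F ∈ A[X] be a monic polynomial of positive degree n. Assume that the K-vector space (A[X]_U/(F·A[X]_U)) ⊗_A K has a basis given by the residue classes of 1, X, …, X^{n-1}. Then the A-module A[X]_U/(F·A[X]_U) has a basis given by the residue classes of 1, X, …, X^{n-1}; in particular it is a finitely generated A-module. -/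
open Polynomial TensorProduct

/-!
The algebra map `φ : A[X]/(F) → A[X]_U/(F)` sends the `A`-basis `1, X, …, X^{n-1}` of
`A[X]/(F)` to the classes in question, and the hypothesis says that `K ⊗ φ` is an isomorphism.
Since `A[X]/(F)` is finite over the local ring `A`, Nakayama's lemma shows that an element of it
is a unit once it becomes a unit in `K ⊗ A[X]/(F)`. Every `u ∈ U` is a unit in `A[X]_U/(F)`, so
it is one in `K ⊗ A[X]_U/(F) ≅ K ⊗ A[X]/(F)`, hence already in `A[X]/(F)`. Thus
`A[X]_U/(F)` is the localization of `A[X]/(F)` at units, and `φ` is an isomorphism.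
-/

theorem Module.Basis.bijective_of_linearIndependent_of_span_eq_top {ι R M N : Type*}
    [Semiring R] [AddCommMonoid M] [Module R M] [AddCommMonoid N] [Module R N]
    (b : Module.Basis ι R M) (f : M →ₗ[R] N) (hli : LinearIndependent R (f ∘ b))
    (hsp : Submodule.span R (Set.range (f ∘ b)) = ⊤) :
    Function.Bijective f := by
  have : f = b.equiv (.mk hli hsp.ge) (.refl ι) := b.ext fun i => by simp
  exact this ▸ LinearEquiv.bijective _

theorem IsLocalization.bijective_quotientMap_of_isUnit {R S : Type*} [CommRing R] [CommRing S]
    [Algebra R S] (M : Submonoid R) [IsLocalization M S] (I : Ideal R)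
    (h : ∀ m ∈ M, IsUnit (Ideal.Quotient.mk I m)) :
    Function.Bijective (Ideal.quotientMap (I.map (algebraMap R S)) (algebraMap R S)
      Ideal.le_comap_map) := by
  have hM : Algebra.algebraMapSubmonoid (R ⧸ I) M ≤ IsUnit.submonoid (R ⧸ I) := by
    rintro _ ⟨m, hm, rfl⟩
    exact h m hm
  exact (IsLocalization.atUnits (R ⧸ I) _ (S := S ⧸ I.map (algebraMap R S)) hM).bijective

theorem AdjoinRoot.powerBasis'_basis_eq_mk_X_pow {R : Type*} [CommRing R] {g : R[X]}
    (hg : g.Monic) (i : Fin g.natDegree) :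
    (AdjoinRoot.powerBasis' hg).basis i = AdjoinRoot.mk g (X ^ (i : ℕ)) := by
  rw [map_pow, AdjoinRoot.mk_X]
  exact (AdjoinRoot.powerBasis' hg).basis_eq_pow i

section ResidueField

variable {A B C : Type*} [CommRing A] [IsLocalRing A] [CommRing B] [Algebra A B]
  [Module.Finite A B]

local notation "K" => IsLocalRing.ResidueField A

theorem IsLocalRing.isUnit_of_isUnit_one_tmul {b : B} (h : IsUnit ((1 : K) ⊗ₜ[A] b)) :
    IsUnit b := by
  have hsurj : Function.Surjective ((TensorProduct.mk A K B 1) ∘ₗ LinearMap.mulLeft A b) := by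
    intro z
    obtain ⟨x, hx⟩ := TensorProduct.mk_surjective A B K Ideal.Quotient.mk_surjective
      (↑h.unit⁻¹ * z)
    refine ⟨x, ?_⟩
    simp only [LinearMap.comp_apply, LinearMap.mulLeft_apply, TensorProduct.mk_apply] at hx ⊢
    rw [← one_mul (1 : K), ← Algebra.TensorProduct.tmul_mul_tmul, hx]
    exact h.unit.mul_inv_cancel_left z
  have hmul : LinearMap.range (LinearMap.mulLeft A b) = ⊤ :=
    (map_tensorProduct_mk_eq_top (N := LinearMap.range (LinearMap.mulLeft A b))).1 <| by
      rw [← LinearMap.range_comp]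
      exact LinearMap.range_eq_top.2 hsurj
  obtain ⟨y, hy⟩ := LinearMap.range_eq_top.1 hmul 1
  exact .of_mul_eq_one y hy

theorem isUnit_of_isUnit_map_of_bijective_baseChange [Semiring C] [Algebra A C] (φ : B →ₐ[A] C)
    (hφ : Function.Bijective (φ.toLinearMap.baseChange K)) {b : B} (h : IsUnit (φ b)) :
    IsUnit b := by
  refine IsLocalRing.isUnit_of_isUnit_one_tmul (A := A) ?_
  rw [← isUnit_map_iff (AlgEquiv.ofBijective (Algebra.TensorProduct.lTensor (S := K) K φ) hφ)]
  exact h.map Algebra.TensorProduct.includeRight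

end ResidueField

theorem basis_of_residue_basis_general {A : Type*} [CommRing A] [IsLocalRing A]
    (U : Submonoid (Polynomial A)) {F : Polynomial A} (hF : F.Monic)
    (hbasis :
      LinearIndependent (IsLocalRing.ResidueField A)
          (fun i : Fin F.natDegree =>
            ((1 : IsLocalRing.ResidueField A) ⊗ₜ[A]
              (Ideal.Quotient.mk (Ideal.span {algebraMap (Polynomial A) (Localization U) F})
                (algebraMap (Polynomial A) (Localization U) (X ^ (i : ℕ)))) :
              IsLocalRing.ResidueField A ⊗[A]
                (Localization U ⧸ Ideal.span {algebraMap (Polynomial A) (Localization U) F})))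
        ∧ Submodule.span (IsLocalRing.ResidueField A)
            (Set.range fun i : Fin F.natDegree =>
              ((1 : IsLocalRing.ResidueField A) ⊗ₜ[A]
                (Ideal.Quotient.mk (Ideal.span {algebraMap (Polynomial A) (Localization U) F})
                  (algebraMap (Polynomial A) (Localization U) (X ^ (i : ℕ)))) :
                IsLocalRing.ResidueField A ⊗[A]
                  (Localization U ⧸ Ideal.span {algebraMap (Polynomial A) (Localization U) F})))
            = ⊤) :
    (LinearIndependent A
        (fun i : Fin F.natDegree =>
          (Ideal.Quotient.mk (Ideal.span {algebraMap (Polynomial A) (Localization U) F})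
            (algebraMap (Polynomial A) (Localization U) (X ^ (i : ℕ)))))
      ∧ Submodule.span A
          (Set.range fun i : Fin F.natDegree =>
            (Ideal.Quotient.mk (Ideal.span {algebraMap (Polynomial A) (Localization U) F})
              (algebraMap (Polynomial A) (Localization U) (X ^ (i : ℕ))))) = ⊤)
    ∧ Module.Finite A
        (Localization U ⧸ Ideal.span {algebraMap (Polynomial A) (Localization U) F}) := by
  rw [← Set.image_singleton, ← Ideal.map_span] at hbasis ⊢
  set L := Localization U
  let I := (Ideal.span {F}).map (algebraMap A[X] L)
  let φ : AdjoinRoot F →ₐ[A] L ⧸ I :=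
    Ideal.quotientMapₐ I (IsScalarTower.toAlgHom A A[X] L) Ideal.le_comap_map
  let b : Module.Basis (Fin F.natDegree) A (AdjoinRoot F) := (AdjoinRoot.powerBasis' hF).basis
  have := hF.finite_adjoinRoot
  have hφb (i : Fin F.natDegree) :
      φ (b i) = Ideal.Quotient.mk I (algebraMap A[X] L (X ^ (i : ℕ))) :=
    congrArg φ (AdjoinRoot.powerBasis'_basis_eq_mk_X_pow hF i)
  let K := IsLocalRing.ResidueField A
  have hφKb : ⇑(φ.toLinearMap.baseChange K) ∘ ⇑(b.baseChange K) = fun i : Fin F.natDegree =>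
      (1 : K) ⊗ₜ[A] Ideal.Quotient.mk I (algebraMap A[X] L (X ^ (i : ℕ))) := by
    funext i
    rw [Function.comp_apply, Module.Basis.baseChange_apply, LinearMap.baseChange_tmul,
      AlgHom.toLinearMap_apply, hφb]
  have hφK : Function.Bijective (φ.toLinearMap.baseChange K) :=
    (b.baseChange K).bijective_of_linearIndependent_of_span_eq_top _
      (by rw [hφKb]; exact hbasis.1) (by rw [hφKb]; exact hbasis.2)
  have hU : ∀ u ∈ U, IsUnit (AdjoinRoot.mk F u) := fun u hu =>
    isUnit_of_isUnit_map_of_bijective_baseChange φ hφK <|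
      (IsLocalization.map_units L ⟨u, hu⟩).map (Ideal.Quotient.mk I)
  let c := b.map <|
    .ofBijective φ.toLinearMap (IsLocalization.bijective_quotientMap_of_isUnit U _ hU)
  have hc : ⇑c = fun i : Fin F.natDegree =>
      Ideal.Quotient.mk I (algebraMap A[X] L (X ^ (i : ℕ))) :=
    funext hφb
  rw [← hc]
  exact ⟨⟨c.linearIndependent, c.span_eq⟩, .of_basis c⟩

/-- Let `A` be a local ring with residue field `K`, `U ⊆ A[X]` multiplicatively closed and
`F ∈ A[X]` monic of positive degree `n`.  If the residue classes of `1, X, …, X^{n-1}` form a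
`K`-basis of `(A[X]_U/(F·A[X]_U)) ⊗_A K`, then the residue classes of `1, X, …, X^{n-1}` form
an `A`-basis of `A[X]_U/(F·A[X]_U)`; in particular the latter is a finitely generated
`A`-module. -/
theorem basis_of_residue_basis {A : Type*} [CommRing A] [IsLocalRing A]
    (U : Submonoid (Polynomial A)) {F : Polynomial A} (hF : F.Monic) (hdeg : 0 < F.natDegree)
    (hbasis :
      LinearIndependent (IsLocalRing.ResidueField A)
          (fun i : Fin F.natDegree =>
            ((1 : IsLocalRing.ResidueField A) ⊗ₜ[A]
              (Ideal.Quotient.mk (Ideal.span {algebraMap (Polynomial A) (Localization U) F})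
                (algebraMap (Polynomial A) (Localization U) (X ^ (i : ℕ)))) :
              IsLocalRing.ResidueField A ⊗[A]
                (Localization U ⧸ Ideal.span {algebraMap (Polynomial A) (Localization U) F})))
        ∧ Submodule.span (IsLocalRing.ResidueField A)
            (Set.range fun i : Fin F.natDegree =>
              ((1 : IsLocalRing.ResidueField A) ⊗ₜ[A]
                (Ideal.Quotient.mk (Ideal.span {algebraMap (Polynomial A) (Localization U) F})
                  (algebraMap (Polynomial A) (Localization U) (X ^ (i : ℕ)))) :
                IsLocalRing.ResidueField A ⊗[A]
                  (Localization U ⧸ Ideal.span {algebraMap (Polynomial A) (Localization U) F})))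
            = ⊤) :
    (LinearIndependent A
        (fun i : Fin F.natDegree =>
          (Ideal.Quotient.mk (Ideal.span {algebraMap (Polynomial A) (Localization U) F})
            (algebraMap (Polynomial A) (Localization U) (X ^ (i : ℕ)))))
      ∧ Submodule.span A
          (Set.range fun i : Fin F.natDegree =>
            (Ideal.Quotient.mk (Ideal.span {algebraMap (Polynomial A) (Localization U) F})
              (algebraMap (Polynomial A) (Localization U) (X ^ (i : ℕ))))) = ⊤)
    ∧ Module.Finite A
        (Localization U ⧸ Ideal.span {algebraMap (Polynomial A) (Localization U) F}) :=
  basis_of_residue_basis_general U hF hbasis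
end
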